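/- (Hamiltonian form of the τ-function identity.) Let a ∈ ℂ, let U ⊆ ℂ be open with 0 ∉ U, let (q₁, p₁, H₁) solve the Painlevé III′ Hamiltonian system with parameters (a − 1/2, a − 1/2) on U and (q₂, p₂, H₂) solve it with parameters (a + 1/2, a + 1/2) on U, and assume p₁(s), p₂(s) ∉ {0, 1} for all s ∈ U. Then there exist solutions (q̃₁, p̃₁) with parameters (−a + 1/2, a − 1/2) and (q̃₂, p̃₂) with parameters (−a − 1/2, a + 1/2) of the Painlevé III′ Hamiltonian system on −U := {−s : s ∈ U}, with Hamiltonians H̃₁, H̃₂, such that for all s ∈ U: −2s + s·H₁(s) + s·H₂(s) = (−s)·H̃₁(−s) + (−s)·H̃₂(−s). -/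

import Mathlib

open Complex

/-- `(q, p, H)` solves the Painlevé III′ Hamiltonian system with parameters
`v1, v2` on an open set `U ⊆ ℂ` with `0 ∉ U`. -/
def SolvesPIII' (v1 v2 : ℂ) (U : Set ℂ) (q p H : ℂ → ℂ) : Prop :=
  IsOpen U ∧ (0 : ℂ) ∉ U ∧
    DifferentiableOn ℂ q U ∧ DifferentiableOn ℂ p U ∧
    (∀ s ∈ U, s * H s =
      q s ^ 2 * p s ^ 2 - (q s ^ 2 + v1 * q s - s) * p s
        + (1 / 2) * (v1 + v2) * q s) ∧
    (∀ s ∈ U, s * deriv q s = 2 * q s ^ 2 * p s - q s ^ 2 - v1 * q s + s) ∧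
    (∀ s ∈ U, s * deriv p s =
      -2 * q s * p s ^ 2 + 2 * q s * p s + v1 * p s - (1 / 2) * (v1 + v2))

/-!
The Bäcklund transformation `(q, p, H)(s) ↦ (-q + v / p, 1 - p, 1 - H)(-s)` takes a
Painlevé III′ solution with parameters `(v, v)` to one with parameters `(-v, v)`. Applied to
both solutions it gives the identity, since
`(-s) (1 - H₁(s)) + (-s) (1 - H₂(s)) = -2s + s H₁(s) + s H₂(s)`.
-/

theorem hasDerivAt_comp_neg {𝕜 : Type*} [NontriviallyNormedField 𝕜] {f : 𝕜 → 𝕜}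
    {x : 𝕜} (hf : DifferentiableAt 𝕜 f (-x)) :
    HasDerivAt (fun y => f (-y)) (-deriv f (-x)) x :=
  deriv_comp_neg f x ▸ (differentiableAt_comp_neg.2 hf).hasDerivAt

theorem SolvesPIII'.flip {v : ℂ} {U : Set ℂ} {q p H : ℂ → ℂ}
    (h : SolvesPIII' v v U q p H) (hp0 : ∀ s ∈ U, p s ≠ 0) :
    SolvesPIII' (-v) v (-U) (fun σ => -q (-σ) + v * (p (-σ))⁻¹) (fun σ => 1 - p (-σ))
      (fun σ => 1 - H (-σ)) := by
  obtain ⟨hU, h0, hq, hp, hH, hq', hp'⟩ := h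
  have hdq (σ : ℂ) (hσ : σ ∈ -U) : HasDerivAt (fun x => -q (-x) + v * (p (-x))⁻¹)
      (deriv q (-σ) + v * deriv p (-σ) / p (-σ) ^ 2) σ := by
    have hqσ := hasDerivAt_comp_neg (hq.differentiableAt (hU.mem_nhds hσ))
    have hpσ := hasDerivAt_comp_neg (hp.differentiableAt (hU.mem_nhds hσ))
    exact (hqσ.neg.add ((hpσ.inv (hp0 (-σ) hσ)).const_mul v)).congr_deriv (by ring)
  have hdp (σ : ℂ) (hσ : σ ∈ -U) : HasDerivAt (fun x => 1 - p (-x)) (deriv p (-σ)) σ := by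
    simpa using (hasDerivAt_comp_neg (hp.differentiableAt (hU.mem_nhds hσ))).const_sub 1
  refine ⟨hU.neg, by simpa using h0,
    fun σ hσ => (hdq σ hσ).differentiableAt.differentiableWithinAt,
    fun σ hσ => (hdp σ hσ).differentiableAt.differentiableWithinAt, fun σ hσ => ?_,
    fun σ hσ => ?_, fun σ hσ => ?_⟩ <;> have hpσ := hp0 (-σ) hσ
  · linear_combination (norm := (field_simp; ring)) hH (-σ) hσ
  · rw [(hdq σ hσ).deriv]
    linear_combination (norm := (field_simp; ring)) -hq' (-σ) hσ - v / p (-σ) ^ 2 * hp' (-σ) hσ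
  · rw [(hdp σ hσ).deriv]
    linear_combination (norm := (field_simp; ring)) -hp' (-σ) hσ

theorem painleveIIIprime_hamiltonian_identity_general (a : ℂ) (U : Set ℂ)
    (q1 p1 H1 q2 p2 H2 : ℂ → ℂ)
    (hsol1 : SolvesPIII' (a - 1 / 2) (a - 1 / 2) U q1 p1 H1)
    (hsol2 : SolvesPIII' (a + 1 / 2) (a + 1 / 2) U q2 p2 H2)
    (hp10 : ∀ s ∈ U, p1 s ≠ 0)
    (hp20 : ∀ s ∈ U, p2 s ≠ 0) :
    ∃ qt1 pt1 Ht1 qt2 pt2 Ht2 : ℂ → ℂ,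
      SolvesPIII' (-a + 1 / 2) (a - 1 / 2) {s : ℂ | -s ∈ U} qt1 pt1 Ht1 ∧
      SolvesPIII' (-a - 1 / 2) (a + 1 / 2) {s : ℂ | -s ∈ U} qt2 pt2 Ht2 ∧
      ∀ s ∈ U,
        -2 * s + s * H1 s + s * H2 s =
          (-s) * Ht1 (-s) + (-s) * Ht2 (-s) := by
  have h1 := hsol1.flip hp10
  have h2 := hsol2.flip hp20
  rw [show -(a - 1 / 2) = -a + 1 / 2 by ring] at h1
  rw [show -(a + 1 / 2) = -a - 1 / 2 by ring] at h2
  exact ⟨_, _, _, _, _, _, h1, h2, fun s _ => by simp only [neg_neg]; ring⟩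

/-- Hamiltonian form of the τ-function identity: for Painlevé III′ solutions
with parameters `(a−1/2, a−1/2)` and `(a+1/2, a+1/2)` on `U`, there are
solutions with parameters `(−a+1/2, a−1/2)` and `(−a−1/2, a+1/2)` on `−U` whose
Hamiltonians satisfy
`−2s + s·H₁(s) + s·H₂(s) = (−s)·H̃₁(−s) + (−s)·H̃₂(−s)`. -/
theorem painleveIIIprime_hamiltonian_identity (a : ℂ) (U : Set ℂ)
    (q1 p1 H1 q2 p2 H2 : ℂ → ℂ)
    (hsol1 : SolvesPIII' (a - 1 / 2) (a - 1 / 2) U q1 p1 H1)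
    (hsol2 : SolvesPIII' (a + 1 / 2) (a + 1 / 2) U q2 p2 H2)
    (hp10 : ∀ s ∈ U, p1 s ≠ 0) (hp11 : ∀ s ∈ U, p1 s ≠ 1)
    (hp20 : ∀ s ∈ U, p2 s ≠ 0) (hp21 : ∀ s ∈ U, p2 s ≠ 1) :
    ∃ qt1 pt1 Ht1 qt2 pt2 Ht2 : ℂ → ℂ,
      SolvesPIII' (-a + 1 / 2) (a - 1 / 2) {s : ℂ | -s ∈ U} qt1 pt1 Ht1 ∧
      SolvesPIII' (-a - 1 / 2) (a + 1 / 2) {s : ℂ | -s ∈ U} qt2 pt2 Ht2 ∧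
      ∀ s ∈ U,
        -2 * s + s * H1 s + s * H2 s =
          (-s) * Ht1 (-s) + (-s) * Ht2 (-s) :=
  painleveIIIprime_hamiltonian_identity_general a U q1 p1 H1 q2 p2 H2 hsol1 hsol2 hp10 hp20
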